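/- arXiv:0904.3207 — 2 statements merged into one kernel-verified Lean document; each statement's English description precedes it below -/
import Mathlib

section
/- Feller property (Lemma). For every finite set Λ ⊂ V and every bounded continuous function f: Ω → ℝ, the function ξ ↦ π_Λ(f|ξ) = ∫_Ω f(ω) π_Λ(dω|ξ) is again a bounded continuous function on Ω. -/
/-!
The growth conditions give, for boundary conditions `ξ` with `∑_{y ∈ ∂Λ} |ξ y|^r ≤ K`,
`exp (-H_Λ(σ|ξ)) ≤ C_K ∏_{x ∈ Λ} exp (-(a_V/2) |σ x|^q)`: every edge term is `O(1 + ∑ |σ x|^r)`,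
and since `q > r` half of the confining potential absorbs it. This integrable majorant is uniform
for `ξ` near any `ξ₀`, so dominated convergence makes `Z_Λ(ξ)` and `∫ e^{-H_Λ(σ|ξ)} f dσ`
continuous in `ξ`, and `π_Λ(f|ξ)` is their quotient with `Z_Λ > 0`. Boundedness by `‖f‖` holds
because each `π_Λ(·|ξ)` is a probability measure.
-/

open MeasureTheory Real Filter

noncomputable section

variable {V : Type} [Countable V] [DecidableEq V]

/-- The configuration equal to `σ` on `Λ` and to `ξ` off `Λ`. -/
def comb (Λ : Finset V) (σ : ↥Λ → ℝ) (ξ : V → ℝ) : V → ℝ :=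
  fun x => if h : x ∈ Λ then σ ⟨x, h⟩ else ξ x

/-- The relative local Hamiltonian `H_Λ(·|ξ)`, evaluated at the full configuration
`ω = ω_Λ × ξ_{Λᶜ}`: the sum of `W(ω(x),ω(y))` over edges with both ends in `Λ`,
plus the sum of `W(ω(x),ω(y))` over edges with `x ∈ Λ`, `y ∉ Λ`, plus `Σ_{x∈Λ} V(ω(x))`. -/
def ham (G : SimpleGraph V) [∀ v : V, Fintype (G.neighborSet v)]
    (W : ℝ → ℝ → ℝ) (P : ℝ → ℝ) (Λ : Finset V) (ω : V → ℝ) : ℝ :=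
  (∑ x ∈ Λ, ∑ y ∈ G.neighborFinset x ∩ Λ, W (ω x) (ω y)) / 2
    + ∑ x ∈ Λ, ∑ y ∈ G.neighborFinset x \ Λ, W (ω x) (ω y)
    + ∑ x ∈ Λ, P (ω x)

/-- The normalizing constant `Z_Λ(ξ)`. -/
def partZ (G : SimpleGraph V) [∀ v : V, Fintype (G.neighborSet v)]
    (W : ℝ → ℝ → ℝ) (P : ℝ → ℝ) (Λ : Finset V) (ξ : V → ℝ) : ℝ :=
  ∫ σ : ↥Λ → ℝ, Real.exp (- ham G W P Λ (comb Λ σ ξ))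

/-- The local Gibbs specification kernel `π_Λ(·|ξ)`, a measure on `Ω = ℝ^V`. -/
def gibbsKer (G : SimpleGraph V) [∀ v : V, Fintype (G.neighborSet v)]
    (W : ℝ → ℝ → ℝ) (P : ℝ → ℝ) (Λ : Finset V) (ξ : V → ℝ) : Measure (V → ℝ) :=
  (ENNReal.ofReal (partZ G W P Λ ξ))⁻¹ •
    Measure.map (fun σ => comb Λ σ ξ)
      ((volume : Measure (↥Λ → ℝ)).withDensity
        fun σ => ENNReal.ofReal (Real.exp (- ham G W P Λ (comb Λ σ ξ))))

/-- `μ` is a Gibbs measure: a probability measure solving the DLR equation. -/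
def IsGibbsMeasure (G : SimpleGraph V) [∀ v : V, Fintype (G.neighborSet v)]
    (W : ℝ → ℝ → ℝ) (P : ℝ → ℝ) (μ : Measure (V → ℝ)) : Prop :=
  IsProbabilityMeasure μ ∧
    ∀ (Λ : Finset V) (A : Set (V → ℝ)), MeasurableSet A →
      μ A = ∫⁻ ω, gibbsKer G W P Λ ω A ∂μ

/-- The weight `w_α(x) = exp(-α ρ(o,x))`. -/
def wgt (G : SimpleGraph V) (o : V) (α : ℝ) (x : V) : ℝ :=
  Real.exp (-α * (G.dist o x : ℝ))

/-- `‖ω‖_{p,α}^p = Σ_{x∈V} |ω(x)|^p w_α(x)`. -/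
def sNorm (G : SimpleGraph V) (o : V) (p α : ℝ) (ω : V → ℝ) : ℝ :=
  ∑' x : V, |ω x| ^ p * wgt G o α x

/-- The set `L^p(V, w_α)` of tempered configurations. -/
def tempered (G : SimpleGraph V) (o : V) (p α : ℝ) : Set (V → ℝ) :=
  {ω | Summable fun x : V => |ω x| ^ p * wgt G o α x}

/-- The summability `Θ(α,θ) = Σ_x Σ_{y∼x} [n(x)n(y)]^θ w_α(x) < ∞`. -/
def ThetaFin (G : SimpleGraph V) [∀ v : V, Fintype (G.neighborSet v)]
    (o : V) (α θ : ℝ) : Prop :=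
  Summable fun x : V =>
    (∑ y ∈ G.neighborFinset x, ((G.degree x : ℝ) * (G.degree y : ℝ)) ^ θ) * wgt G o α x

open Set Topology

theorem integrable_exp_neg_mul_abs_rpow {b q : ℝ} (hb : 0 < b) (hq : 0 < q) :
    Integrable fun t : ℝ => exp (-b * |t| ^ q) := by
  have hIoi : IntegrableOn (fun t : ℝ => exp (-b * |t| ^ q)) (Ioi 0) := by
    refine (integrableOn_rpow_mul_exp_neg_mul_rpow (s := 0) (by norm_num) hq hb).congr_fun
      (fun t ht => ?_) measurableSet_Ioi
    simp [abs_of_pos (mem_Ioi.mp ht)]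
  have hIic : IntegrableOn (fun t : ℝ => exp (-b * |t| ^ q)) (Iic 0) := by
    have hneg : MeasurableEmbedding fun t : ℝ => -t := (Homeomorph.neg ℝ).measurableEmbedding
    rw [← Measure.map_neg_eq_self (volume : Measure ℝ), hneg.integrableOn_map_iff]
    simp_rw [Function.comp_def, abs_neg, neg_preimage, neg_Iic, neg_zero]
    exact (integrableOn_Ici_iff_integrableOn_Ioi).2 hIoi
  rw [← integrableOn_univ, ← Iic_union_Ioi (a := (0 : ℝ))]
  exact hIic.union hIoi

theorem exists_mul_rpow_le_mul_rpow_add {r q : ℝ} (hr : 0 ≤ r) (hrq : r < q) (c : ℝ) {ε : ℝ}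
    (hε : 0 < ε) : ∃ M, ∀ s, 0 ≤ s → c * s ^ r ≤ ε * s ^ q + M := by
  have hlim : Tendsto (fun s : ℝ => c * s ^ (r - q)) atTop (𝓝 0) := by
    simpa using (tendsto_rpow_neg_atTop (sub_pos.mpr hrq)).const_mul c
  obtain ⟨T, hT⟩ := eventually_atTop.1
    ((hlim.eventually (gt_mem_nhds hε)).and (eventually_gt_atTop 0))
  have hT0 : 0 < T := (hT T le_rfl).2
  refine ⟨|c| * T ^ r, fun s hs => ?_⟩
  have hM : 0 ≤ |c| * T ^ r := by positivity
  rcases le_or_gt T s with hTs | hsT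
  · obtain ⟨hsmall, hspos⟩ := hT s hTs
    have hsplit : c * s ^ r = c * s ^ (r - q) * s ^ q := by
      rw [mul_assoc, ← rpow_add hspos, sub_add_cancel]
    have : c * s ^ (r - q) * s ^ q ≤ ε * s ^ q :=
      mul_le_mul_of_nonneg_right hsmall.le (rpow_nonneg hs q)
    linarith
  · calc c * s ^ r ≤ |c| * s ^ r := mul_le_mul_of_nonneg_right (le_abs_self c) (rpow_nonneg hs r)
      _ ≤ |c| * T ^ r := mul_le_mul_of_nonneg_left (rpow_le_rpow hs hsT.le hr) (abs_nonneg c)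
      _ ≤ ε * s ^ q + |c| * T ^ r := le_add_of_nonneg_left (by positivity)

theorem continuous_integral_of_locally_dominated {X α E : Type*} [TopologicalSpace X]
    [FirstCountableTopology X] [MeasurableSpace α] {μ : Measure α} [NormedAddCommGroup E]
    [NormedSpace ℝ E] {F : X → α → E} (hF_meas : ∀ x, AEStronglyMeasurable (F x) μ)
    (hF_cont : ∀ a, Continuous fun x => F x a)
    (h_bound : ∀ x₀, ∃ bound : α → ℝ, Integrable bound μ ∧ ∀ᶠ x in 𝓝 x₀, ∀ a, ‖F x a‖ ≤ bound a) :
    Continuous fun x => ∫ a, F x a ∂μ := by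
  refine continuous_iff_continuousAt.2 fun x₀ => ?_
  obtain ⟨bound, hint, hle⟩ := h_bound x₀
  exact continuousAt_of_dominated (.of_forall hF_meas) (hle.mono fun x hx => .of_forall hx) hint
    (.of_forall fun a => (hF_cont a).continuousAt)

theorem SimpleGraph.abs_sum_sum_le_sum_degree_mul {V : Type*} {G : SimpleGraph V}
    [∀ v, Fintype (G.neighborSet v)] {Λ : Finset V} {t : V → Finset V}
    (ht : ∀ x, t x ⊆ G.neighborFinset x) {F : V → V → ℝ} {B : ℝ} (hB : 0 ≤ B)
    (hF : ∀ x ∈ Λ, ∀ y ∈ t x, |F x y| ≤ B) :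
    |∑ x ∈ Λ, ∑ y ∈ t x, F x y| ≤ (∑ x ∈ Λ, (G.degree x : ℝ)) * B := by
  rw [Finset.sum_mul]
  refine (Finset.abs_sum_le_sum_abs _ _).trans (Finset.sum_le_sum fun x hx => ?_)
  calc |∑ y ∈ t x, F x y| ≤ ∑ y ∈ t x, |F x y| := Finset.abs_sum_le_sum_abs _ _
    _ ≤ (t x).card * B := by simpa using Finset.sum_le_sum (hF x hx)
    _ ≤ G.degree x * B := by
      gcongr
      rw [← G.card_neighborFinset_eq_degree]
      exact Finset.card_le_card (ht x)

section LocalSpecification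

variable {V : Type} [DecidableEq V]

theorem comb_of_mem {Λ : Finset V} {σ : ↥Λ → ℝ} {ξ : V → ℝ} {x : V} (hx : x ∈ Λ) :
    comb Λ σ ξ x = σ ⟨x, hx⟩ := dif_pos hx

theorem comb_of_notMem {Λ : Finset V} {σ : ↥Λ → ℝ} {ξ : V → ℝ} {x : V} (hx : x ∉ Λ) :
    comb Λ σ ξ x = ξ x := dif_neg hx

theorem continuous_comb (Λ : Finset V) :
    Continuous fun p : (↥Λ → ℝ) × (V → ℝ) => comb Λ p.1 p.2 := by
  refine continuous_pi fun x => ?_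
  by_cases hx : x ∈ Λ
  · simp only [comb_of_mem hx]
    exact (continuous_apply _).comp continuous_fst
  · simp only [comb_of_notMem hx]
    exact (continuous_apply x).comp continuous_snd

theorem continuous_comb_left (Λ : Finset V) (ξ : V → ℝ) :
    Continuous fun σ : ↥Λ → ℝ => comb Λ σ ξ :=
  (continuous_comb Λ).comp (continuous_id.prodMk continuous_const)

theorem continuous_comb_right (Λ : Finset V) (σ : ↥Λ → ℝ) :
    Continuous fun ξ : V → ℝ => comb Λ σ ξ :=
  (continuous_comb Λ).comp (continuous_const.prodMk continuous_id)

theorem measurable_comb_left (Λ : Finset V) (ξ : V → ℝ) :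
    Measurable fun σ : ↥Λ → ℝ => comb Λ σ ξ := by
  refine measurable_pi_lambda _ fun x => ?_
  by_cases hx : x ∈ Λ
  · simp only [comb_of_mem hx]
    exact measurable_pi_apply _
  · simp only [comb_of_notMem hx]
    exact measurable_const

variable (G : SimpleGraph V) [∀ v : V, Fintype (G.neighborSet v)]

theorem continuous_ham {W : ℝ → ℝ → ℝ} (hW : Continuous (Function.uncurry W)) {P : ℝ → ℝ}
    (hP : Continuous P) (Λ : Finset V) : Continuous (ham G W P Λ) := by
  have hedge (x y : V) : Continuous fun ω : V → ℝ => W (ω x) (ω y) :=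
    hW.comp₂ (continuous_apply x) (continuous_apply y)
  unfold ham
  fun_prop

def outerBoundary (Λ : Finset V) : Finset V :=
  Λ.biUnion fun x => G.neighborFinset x \ Λ

def BoltzmannFactorLocallyDominated (W : ℝ → ℝ → ℝ) (P : ℝ → ℝ) (Λ : Finset V) : Prop :=
  ∀ ξ₀ : V → ℝ, ∃ bound : (↥Λ → ℝ) → ℝ, Integrable bound ∧
    ∀ᶠ ξ in 𝓝 ξ₀, ∀ σ, exp (-ham G W P Λ (comb Λ σ ξ)) ≤ bound σ

variable {G}

theorem abs_comb_rpow_le_add {Λ : Finset V} (σ : ↥Λ → ℝ) (ξ : V → ℝ) (r : ℝ) {z : V}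
    (hz : z ∈ Λ ∪ outerBoundary G Λ) :
    |comb Λ σ ξ z| ^ r ≤ ∑ x, |σ x| ^ r + ∑ y ∈ outerBoundary G Λ, |ξ y| ^ r := by
  have hσ : 0 ≤ ∑ x, |σ x| ^ r := by positivity
  have hξ : 0 ≤ ∑ y ∈ outerBoundary G Λ, |ξ y| ^ r := by positivity
  by_cases hzΛ : z ∈ Λ
  · rw [comb_of_mem hzΛ]
    have := Finset.single_le_sum (f := fun x : ↥Λ => |σ x| ^ r) (fun x _ => by positivity)
      (Finset.mem_univ ⟨z, hzΛ⟩)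
    linarith
  · rw [comb_of_notMem hzΛ]
    have := Finset.single_le_sum (f := fun y => |ξ y| ^ r) (fun y _ => by positivity)
      ((Finset.mem_union.1 hz).resolve_left hzΛ)
    linarith

theorem neg_ham_le {W : ℝ → ℝ → ℝ} {P : ℝ → ℝ} {a c q : ℝ} (hP : ∀ u, a * |u| ^ q - c ≤ P u)
    {Λ : Finset V} {ω : V → ℝ} {B : ℝ} (hB : 0 ≤ B)
    (hW : ∀ x ∈ Λ, ∀ y ∈ G.neighborFinset x, |W (ω x) (ω y)| ≤ B) :
    -ham G W P Λ ω ≤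
      2 * (∑ x ∈ Λ, (G.degree x : ℝ)) * B + c * Λ.card - a * ∑ x ∈ Λ, |ω x| ^ q := by
  have hinner := G.abs_sum_sum_le_sum_degree_mul (t := fun x => G.neighborFinset x ∩ Λ)
    (fun x => Finset.inter_subset_left) hB
    fun x hx y hy => hW x hx y (Finset.mem_inter.1 hy).1
  have houter := G.abs_sum_sum_le_sum_degree_mul (t := fun x => G.neighborFinset x \ Λ)
    (fun x => Finset.sdiff_subset) hB
    fun x hx y hy => hW x hx y (Finset.mem_sdiff.1 hy).1
  have hpot : a * ∑ x ∈ Λ, |ω x| ^ q - c * Λ.card ≤ ∑ x ∈ Λ, P (ω x) := by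
    rw [Finset.mul_sum, mul_comm, ← nsmul_eq_mul, ← Finset.sum_const, ← Finset.sum_sub_distrib]
    exact Finset.sum_le_sum fun x _ => hP (ω x)
  have hD : 0 ≤ (∑ x ∈ Λ, (G.degree x : ℝ)) * B := by positivity
  unfold ham
  linarith [neg_abs_le (∑ x ∈ Λ, ∑ y ∈ G.neighborFinset x ∩ Λ, W (ω x) (ω y)),
    neg_abs_le (∑ x ∈ Λ, ∑ y ∈ G.neighborFinset x \ Λ, W (ω x) (ω y))]

theorem exists_exp_neg_ham_comb_le {W : ℝ → ℝ → ℝ} {IW JW r : ℝ} (hIW : 0 ≤ IW) (hJW : 0 ≤ JW)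
    (hr : 0 ≤ r) (hW : ∀ u v : ℝ, |W u v| ≤ (IW + JW * (|u| ^ r + |v| ^ r)) / 2)
    {P : ℝ → ℝ} {a c q : ℝ} (ha : 0 < a) (hrq : r < q) (hP : ∀ u, a * |u| ^ q - c ≤ P u)
    (Λ : Finset V) (K : ℝ) :
    ∃ C, ∀ σ ξ, ∑ y ∈ outerBoundary G Λ, |ξ y| ^ r ≤ K →
      exp (-ham G W P Λ (comb Λ σ ξ)) ≤ C * ∏ x, exp (-(a / 2) * |σ x| ^ q) := by
  set D : ℝ := ∑ x ∈ Λ, (G.degree x : ℝ)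
  -- the interaction grows like `2 * D * JW * ∑ x, |σ x| ^ r`; half of the potential absorbs it
  obtain ⟨M, hM⟩ := exists_mul_rpow_le_mul_rpow_add hr hrq (2 * D * JW) (half_pos ha)
  refine ⟨exp (D * IW + 2 * D * JW * K + c * Λ.card + Λ.card * M), fun σ ξ hξ => ?_⟩
  set R := ∑ x, |σ x| ^ r
  have hK : 0 ≤ K := le_trans (by positivity) hξ
  have hedge : ∀ x ∈ Λ, ∀ y ∈ G.neighborFinset x,
      |W (comb Λ σ ξ x) (comb Λ σ ξ y)| ≤ IW / 2 + JW * (R + K) := by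
    intro x hx y hy
    have hmem : y ∈ Λ ∪ outerBoundary G Λ := by
      by_cases hyΛ : y ∈ Λ
      · exact Finset.mem_union_left _ hyΛ
      · exact Finset.mem_union_right _ (Finset.mem_biUnion.2 ⟨x, hx, Finset.mem_sdiff.2 ⟨hy, hyΛ⟩⟩)
    have hx' := abs_comb_rpow_le_add σ ξ r (Finset.mem_union_left (outerBoundary G Λ) hx)
    have hy' := abs_comb_rpow_le_add σ ξ r hmem
    have := hW (comb Λ σ ξ x) (comb Λ σ ξ y)
    nlinarith
  have hham := neg_ham_le hP (by positivity) hedge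
  have hpot : ∑ x ∈ Λ, |comb Λ σ ξ x| ^ q = ∑ x, |σ x| ^ q := by
    rw [← Finset.sum_coe_sort Λ]
    exact Finset.sum_congr rfl fun x _ => by rw [comb_of_mem x.2]
  have hyoung : 2 * D * JW * R ≤ a / 2 * ∑ x, |σ x| ^ q + Λ.card * M := by
    calc 2 * D * JW * R = ∑ x, 2 * D * JW * |σ x| ^ r := Finset.mul_sum _ _ _
      _ ≤ ∑ x, (a / 2 * |σ x| ^ q + M) := Finset.sum_le_sum fun x _ => hM _ (abs_nonneg _)
      _ = a / 2 * ∑ x, |σ x| ^ q + Λ.card * M := by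
        simp [Finset.mul_sum, Finset.sum_add_distrib]
  rw [← exp_sum, ← exp_add, exp_le_exp]
  simp only [neg_mul, Finset.sum_neg_distrib, ← Finset.mul_sum]
  nlinarith

theorem boltzmannFactorLocallyDominated {W : ℝ → ℝ → ℝ} {IW JW r : ℝ} (hIW : 0 ≤ IW)
    (hJW : 0 ≤ JW) (hr : 0 ≤ r) (hW : ∀ u v : ℝ, |W u v| ≤ (IW + JW * (|u| ^ r + |v| ^ r)) / 2)
    {P : ℝ → ℝ} {a c q : ℝ} (ha : 0 < a) (hrq : r < q) (hP : ∀ u, a * |u| ^ q - c ≤ P u)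
    (Λ : Finset V) : BoltzmannFactorLocallyDominated G W P Λ := by
  intro ξ₀
  obtain ⟨C, hC⟩ := exists_exp_neg_ham_comb_le (G := G) hIW hJW hr hW ha hrq hP Λ
    (∑ y ∈ outerBoundary G Λ, |ξ₀ y| ^ r + 1)
  have hint : Integrable fun σ : ↥Λ → ℝ => ∏ x, exp (-(a / 2) * |σ x| ^ q) :=
    Integrable.fintype_prod fun _ => integrable_exp_neg_mul_abs_rpow (half_pos ha) (hr.trans_lt hrq)
  have hcont : Continuous fun ξ : V → ℝ => ∑ y ∈ outerBoundary G Λ, |ξ y| ^ r :=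
    continuous_finsetSum _ fun y _ => (continuous_apply y).abs.rpow_const fun _ => Or.inr hr
  refine ⟨_, hint.const_mul C, ?_⟩
  filter_upwards [hcont.continuousAt.eventually_lt continuousAt_const (lt_add_one _)]
    with ξ hξ σ using hC σ ξ hξ.le

variable {W : ℝ → ℝ → ℝ} {P : ℝ → ℝ} {Λ : Finset V}

theorem integrable_exp_neg_ham_comb (hH : Continuous (ham G W P Λ))
    (hdom : BoltzmannFactorLocallyDominated G W P Λ)
    (ξ : V → ℝ) : Integrable fun σ : ↥Λ → ℝ => exp (-ham G W P Λ (comb Λ σ ξ)) := by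
  obtain ⟨bound, hbound, hle⟩ := hdom ξ
  refine hbound.mono' ?_ (.of_forall fun σ => ?_)
  · exact (continuous_exp.comp (hH.comp (continuous_comb_left Λ ξ)).neg).aestronglyMeasurable
  · rw [norm_of_nonneg (exp_pos _).le]
    exact hle.self_of_nhds σ

theorem partZ_nonneg (ξ : V → ℝ) : 0 ≤ partZ G W P Λ ξ :=
  integral_nonneg fun _ => (exp_pos _).le

theorem partZ_pos (hH : Continuous (ham G W P Λ))
    (hdom : BoltzmannFactorLocallyDominated G W P Λ)
    (ξ : V → ℝ) : 0 < partZ G W P Λ ξ :=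
  integral_exp_pos (integrable_exp_neg_ham_comb hH hdom ξ)

theorem integral_gibbsKer (hH : Continuous (ham G W P Λ)) {f : (V → ℝ) → ℝ} (hf : Measurable f)
    (ξ : V → ℝ) :
    ∫ ω, f ω ∂gibbsKer G W P Λ ξ =
      (partZ G W P Λ ξ)⁻¹ * ∫ σ, exp (-ham G W P Λ (comb Λ σ ξ)) * f (comb Λ σ ξ) := by
  have hdens : Measurable fun σ : ↥Λ → ℝ => ENNReal.ofReal (exp (-ham G W P Λ (comb Λ σ ξ))) :=
    ENNReal.measurable_ofReal.comp
      (continuous_exp.comp (hH.comp (continuous_comb_left Λ ξ)).neg).measurable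
  rw [gibbsKer, integral_smul_measure,
    integral_map (measurable_comb_left Λ ξ).aemeasurable hf.aestronglyMeasurable,
    integral_withDensity_eq_integral_toReal_smul hdens (.of_forall fun _ => ENNReal.ofReal_lt_top),
    ENNReal.toReal_inv, ENNReal.toReal_ofReal (partZ_nonneg ξ)]
  simp only [ENNReal.toReal_ofReal (exp_pos _).le, smul_eq_mul]

theorem isProbabilityMeasure_gibbsKer (hH : Continuous (ham G W P Λ))
    (hdom : BoltzmannFactorLocallyDominated G W P Λ)
    (ξ : V → ℝ) : IsProbabilityMeasure (gibbsKer G W P Λ ξ) := by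
  constructor
  rw [gibbsKer, Measure.smul_apply, Measure.map_apply (measurable_comb_left Λ ξ) .univ,
    preimage_univ, withDensity_apply _ .univ, Measure.restrict_univ,
    ← ofReal_integral_eq_lintegral_ofReal (integrable_exp_neg_ham_comb hH hdom ξ)
      (.of_forall fun _ => (exp_pos _).le), smul_eq_mul]
  exact ENNReal.inv_mul_cancel (ENNReal.ofReal_pos.2 (partZ_pos hH hdom ξ)).ne'
    ENNReal.ofReal_ne_top

theorem continuous_integral_exp_neg_ham_comb_mul [Countable V] (hH : Continuous (ham G W P Λ))
    (hdom : BoltzmannFactorLocallyDominated G W P Λ)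
    (φ : BoundedContinuousFunction (V → ℝ) ℝ) :
    Continuous fun ξ => ∫ σ, exp (-ham G W P Λ (comb Λ σ ξ)) * φ (comb Λ σ ξ) := by
  refine continuous_integral_of_locally_dominated (fun ξ => ?_) (fun σ => ?_) (fun ξ₀ => ?_)
  · exact (integrable_exp_neg_ham_comb hH hdom ξ).aestronglyMeasurable.mul
      (φ.continuous.comp (continuous_comb_left Λ ξ)).aestronglyMeasurable
  · have hcomb := continuous_comb_right Λ σ
    exact (continuous_exp.comp (hH.comp hcomb).neg).mul (φ.continuous.comp hcomb)
  · obtain ⟨bound, hbound, hle⟩ := hdom ξ₀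
    refine ⟨fun σ => ‖φ‖ * bound σ, hbound.const_mul _, hle.mono fun ξ hξ σ => ?_⟩
    rw [norm_mul, norm_of_nonneg (exp_pos _).le, mul_comm]
    exact mul_le_mul (φ.norm_coe_le_norm _) (hξ σ) (exp_pos _).le (norm_nonneg _)

theorem continuous_partZ [Countable V] (hH : Continuous (ham G W P Λ))
    (hdom : BoltzmannFactorLocallyDominated G W P Λ) : Continuous (partZ G W P Λ) := by
  have := continuous_integral_exp_neg_ham_comb_mul hH hdom 1
  simp only [BoundedContinuousFunction.coe_one, Pi.one_apply, mul_one] at this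
  exact this

end LocalSpecification

/-- **Feller property (Lemma).** For every finite `Λ ⊂ V` and every bounded continuous
`f : Ω → ℝ`, the function `ξ ↦ π_Λ(f|ξ) = ∫ f dπ_Λ(·|ξ)` is again bounded and continuous. -/
theorem feller_property_of_specification
    (G : SimpleGraph V) [∀ v : V, Fintype (G.neighborSet v)] (hconn : G.Connected)
    (W : ℝ → ℝ → ℝ) (hWcont : Continuous (Function.uncurry W))
    (hWsym : ∀ u v : ℝ, W u v = W v u)
    (IW JW r : ℝ) (hIW : 0 < IW) (hJW : 0 < JW) (hr : 0 < r)
    (hW : ∀ u v : ℝ, |W u v| ≤ (IW + JW * (|u| ^ r + |v| ^ r)) / 2)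
    (P : ℝ → ℝ) (hPcont : Continuous P)
    (aV cV q : ℝ) (haV : 0 < aV) (hcV : 0 < cV) (hq : r < q)
    (hP : ∀ u : ℝ, aV * |u| ^ q - cV ≤ P u)
    (Λ : Finset V) (f : BoundedContinuousFunction (V → ℝ) ℝ) :
    Continuous (fun ξ : V → ℝ => ∫ ω, f ω ∂(gibbsKer G W P Λ ξ)) ∧
    ∃ M : ℝ, ∀ ξ : V → ℝ, |∫ ω, f ω ∂(gibbsKer G W P Λ ξ)| ≤ M := by
  have hH := continuous_ham G hWcont hPcont Λ
  have hdom := boltzmannFactorLocallyDominated (G := G) hIW.le hJW.le hr.le hW haV hq hP Λ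
  refine ⟨?_, ‖f‖, fun ξ => ?_⟩
  · simp_rw [integral_gibbsKer hH f.continuous.measurable]
    exact ((continuous_partZ hH hdom).inv₀ fun ξ => (partZ_pos hH hdom ξ).ne').mul
      (continuous_integral_exp_neg_ham_comb_mul hH hdom f)
  · have := isProbabilityMeasure_gibbsKer hH hdom ξ
    exact f.norm_integral_le_norm _
end
end

section
/- Lemma 4 (exponential sphere-sum bound). Let n_* > 2 be an integer, υ, ε > 0, and φ(b) = υ log b (log log b)^{1+ε} for b ≥ n_* + 1, with φ(n_* + 1) > 1. Let G ∈ 𝔾(n_*, φ). Then for every θ > 0 there exists a > 0 (depending only on θ, n_*, υ, ε) such that for every vertex x ∈ V there exists N_x ∈ ℕ with Σ_{y : ρ(x,y) = N} n(y)^{1+θ} ≤ exp(aN) for all N ≥ N_x. -/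
open Real

noncomputable section

/-- The repulsion function `φ(b) = υ log b (log log b)^{1+ε}`. -/
def phiRep (υ ε b : ℝ) : ℝ := υ * Real.log b * Real.log (Real.log b) ^ (1 + ε)

/-- `G` belongs to the class `𝔾(n_*, φ)`: any two distinct vertices whose degrees both
exceed `n_*` are at path distance at least `φ(max{n(x),n(y)})`. -/
def RepulsiveGraph {V : Type} (G : SimpleGraph V) [∀ v : V, Fintype (G.neighborSet v)]
    (nstar : ℕ) (φ : ℝ → ℝ) : Prop :=
  ∀ x y : V, x ≠ y → nstar < G.degree x → nstar < G.degree y →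
    φ (max (G.degree x : ℝ) (G.degree y : ℝ)) ≤ (G.dist x y : ℝ)

open Finset
open scoped ENNReal

/-!
The probability that simple random walk from `x` follows a given walk `p` of length `N` is
`p.weight = ∏_{i<N} n(p_i)⁻¹`, and these weights sum to at most `1` over all walks of length `N`
from `x`. Charging each `y` on the sphere of radius `N` to a geodesic from `x` to `y` reduces the
theorem to `n(y)^{1+θ} ∏_{i<N} n(p_i) ≤ exp(aN)` along geodesics, i.e. to
`∑_{i≤N} log n(p_i) = O(N)`. Vertices of degree at most `n_*` contribute at most `log n_*` each.
For two high-degree vertices `p_i, p_j` with `i < j`, repulsion and `log b ≤ C φ(b)` give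
`log n(p_i) ≤ C (j - i)`, so these contributions telescope to `O(N)`; the last one is bounded by
comparing it with a fixed high-degree vertex of the graph.
-/

namespace Finset

theorem sum_le_mul_of_forall_le_mul_sub {f : ℕ → ℝ} {C : ℝ} (hC : 0 ≤ C) {s : Finset ℕ}
    {a : ℕ} (hs : ∀ i ∈ s, i < a)
    (hf : ∀ i ∈ s, ∀ j ∈ insert a s, i < j → f i ≤ C * (j - i)) : ∑ i ∈ s, f i ≤ C * a := by
  induction s using Finset.induction_on_max generalizing a with
  | empty => simpa using by positivity
  | insert b s hsb ih =>
    have hb : f b ≤ C * (a - b) :=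
      hf b (mem_insert_self b s) a (mem_insert_self a _) (hs b (mem_insert_self b s))
    have hsum : ∑ i ∈ s, f i ≤ C * b := ih hsb fun i hi j hj hij =>
      hf i (mem_insert_of_mem hi) j (mem_insert_of_mem hj) hij
    rw [sum_insert fun hbs => (hsb b hbs).false]
    linarith

theorem sum_le_mul_add_of_forall_le_mul_sub {f : ℕ → ℝ} {C B : ℝ} {N : ℕ} (hC : 0 ≤ C)
    (hB : 0 ≤ B) {s : Finset ℕ} (hs : ∀ i ∈ s, i ≤ N)
    (hpair : ∀ i ∈ s, ∀ j ∈ s, i < j → f i ≤ C * (j - i)) (hbound : ∀ i ∈ s, f i ≤ B) :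
    ∑ i ∈ s, f i ≤ C * N + B := by
  rcases s.eq_empty_or_nonempty with rfl | hne
  · simpa using by positivity
  set m := s.max' hne
  have hm : m ∈ s := s.max'_mem hne
  have hlt : ∀ i ∈ s.erase m, i < m := fun i hi =>
    (s.le_max' i (mem_of_mem_erase hi)).lt_of_ne (ne_of_mem_erase hi)
  have htail : ∑ i ∈ s.erase m, f i ≤ C * m :=
    sum_le_mul_of_forall_le_mul_sub hC hlt (by
      rw [insert_erase hm]
      exact fun i hi => hpair i (mem_of_mem_erase hi))
  have hmN : (m : ℝ) ≤ N := by exact_mod_cast hs m hm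
  rw [← add_sum_erase s f hm]
  nlinarith [hbound m hm]

end Finset

theorem Real.rpow_mul_prod_le_exp_mul_sum_log {θ : ℝ} (hθ : 0 ≤ 1 + θ) (d : ℕ → ℕ) (N : ℕ) :
    (d N : ℝ) ^ (1 + θ) * ∏ i ∈ range N, (d i : ℝ) ≤
      exp ((2 + θ) * ∑ i ∈ range (N + 1), log (d i)) := by
  set L := ∑ i ∈ range (N + 1), log (d i) with hL
  have hprod : ∏ i ∈ range N, (d i : ℝ) ≤ exp L := calc
    _ ≤ ∏ i ∈ range N, exp (log (d i)) :=
      prod_le_prod (fun _ _ => by positivity) fun i _ => le_exp_log _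
    _ = exp (∑ i ∈ range N, log (d i)) := (exp_sum ..).symm
    _ ≤ exp L := exp_le_exp.2 <| by
      rw [hL, sum_range_succ]; linarith [log_natCast_nonneg (d N)]
  have hlast : (d N : ℝ) ≤ exp L := (le_exp_log _).trans <| exp_le_exp.2 <|
    single_le_sum (fun i _ => log_natCast_nonneg (d i)) (self_mem_range_succ N)
  calc _ ≤ exp L ^ (1 + θ) * exp L := by gcongr
    _ = exp ((2 + θ) * L) := by rw [← exp_mul, ← exp_add]; ring_nf

theorem exists_log_le_mul_phiRep {υ ε b₀ : ℝ} (hυ : 0 < υ) (hε : 0 ≤ 1 + ε)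
    (hb₀ : exp 1 < b₀) : ∃ C, 0 ≤ C ∧ ∀ b, b₀ ≤ b → log b ≤ C * phiRep υ ε b := by
  have hlog₀ : 1 < log b₀ := (lt_log_iff_exp_lt ((exp_pos 1).trans hb₀)).2 hb₀
  have hK : 0 < υ * log (log b₀) ^ (1 + ε) := mul_pos hυ (rpow_pos_of_pos (log_pos hlog₀) _)
  refine ⟨(υ * log (log b₀) ^ (1 + ε))⁻¹, by positivity, fun b hb => ?_⟩
  have hlog : log b₀ ≤ log b := log_le_log ((exp_pos 1).trans hb₀) hb
  have hpow : log (log b₀) ^ (1 + ε) ≤ log (log b) ^ (1 + ε) :=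
    rpow_le_rpow (log_pos hlog₀).le (log_le_log (by linarith) hlog) hε
  rw [inv_mul_eq_div, le_div_iff₀ hK, phiRep]
  calc log b * (υ * log (log b₀) ^ (1 + ε)) ≤ log b * (υ * log (log b) ^ (1 + ε)) :=
        mul_le_mul_of_nonneg_left (mul_le_mul_of_nonneg_left hpow hυ.le) (by linarith)
    _ = _ := by ring

namespace SimpleGraph

section Walks

variable {V : Type*} {G : SimpleGraph V} {u v w : V}

theorem Walk.dist_getVert_le (p : G.Walk u v) {i j : ℕ} (hij : i ≤ j) :
    G.dist (p.getVert i) (p.getVert j) ≤ j - i := by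
  have h := G.dist_le ((p.drop i).take (j - i))
  rw [Walk.take_length, Walk.drop_getVert, Nat.add_sub_cancel' hij] at h
  exact h.trans (min_le_left _ _)

variable [G.LocallyFinite]

def Walk.weight (p : G.Walk u v) : ℝ≥0∞ :=
  ∏ i ∈ range p.length, (G.degree (p.getVert i) : ℝ≥0∞)⁻¹

theorem Walk.weight_cons (h : G.Adj u w) (q : G.Walk w v) :
    (Walk.cons h q).weight = (G.degree u : ℝ≥0∞)⁻¹ * q.weight := by
  simp only [Walk.weight, Walk.length_cons, prod_range_succ', Walk.getVert_cons_succ]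
  rw [mul_comm]
  rfl

theorem Walk.weight_mul_prod_degree (p : G.Walk u v) :
    p.weight * ∏ i ∈ range p.length, (G.degree (p.getVert i) : ℝ≥0∞) = 1 := by
  rw [Walk.weight, ← prod_mul_distrib]
  refine prod_eq_one fun i hi => ENNReal.inv_mul_cancel ?_ (ENNReal.natCast_ne_top _)
  exact_mod_cast ((G.degree_pos_iff_exists_adj _).2 ⟨_, p.adj_getVert_succ (mem_range.1 hi)⟩).ne'

theorem Walk.ofReal_le_ofReal_mul_weight {r B : ℝ} (p : G.Walk u v)
    (h : r * ∏ i ∈ range p.length, (G.degree (p.getVert i) : ℝ) ≤ B) :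
    ENNReal.ofReal r ≤ ENNReal.ofReal B * p.weight := calc
  ENNReal.ofReal r
      = ENNReal.ofReal r * (∏ i ∈ range p.length, (G.degree (p.getVert i) : ℝ≥0∞)) * p.weight := by
    rw [mul_assoc, mul_comm _ p.weight, p.weight_mul_prod_degree, mul_one]
  _ = ENNReal.ofReal (r * ∏ i ∈ range p.length, (G.degree (p.getVert i) : ℝ)) * p.weight := by
    rw [ENNReal.ofReal_mul' (by positivity), ENNReal.ofReal_prod_of_nonneg fun _ _ => by positivity]
    simp only [ENNReal.ofReal_natCast]
  _ ≤ ENNReal.ofReal B * p.weight := by gcongr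

theorem tsum_sum_weight_finsetWalkLength_le_one [DecidableEq V] (n : ℕ) (u : V) :
    ∑' v, ∑ p ∈ G.finsetWalkLength n u v, p.weight ≤ 1 := by
  induction n generalizing u with
  | zero =>
    rw [tsum_eq_single u fun v hv => by simp [finsetWalkLength, Ne.symm hv]]
    simp [finsetWalkLength, Walk.weight]
  | succ n ih =>
    calc ∑' v, ∑ p ∈ G.finsetWalkLength (n + 1) u v, p.weight
        = ∑' v, ∑ w : G.neighborSet u,
            (G.degree u : ℝ≥0∞)⁻¹ * ∑ q ∈ G.finsetWalkLength n w v, q.weight := by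
          refine tsum_congr fun v => ?_
          rw [finsetWalkLength, sum_biUnion]
          · refine sum_congr rfl fun w _ => ?_
            rw [sum_map, mul_sum]
            exact sum_congr rfl fun q _ => Walk.weight_cons _ q
          · rintro ⟨x, hx⟩ - ⟨y, hy⟩ - hxy
            rw [Function.onFun, disjoint_iff_inf_le]
            intro p hp
            simp only [inf_eq_inter, mem_inter, mem_map] at hp
            obtain ⟨⟨px, _, rfl⟩, ⟨py, hpy, hp⟩⟩ := hp
            cases hp
            simp at hxy
      _ = (G.degree u : ℝ≥0∞)⁻¹ *
            ∑ w : G.neighborSet u, ∑' v, ∑ q ∈ G.finsetWalkLength n w v, q.weight := by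
          rw [Summable.tsum_finsetSum fun _ _ => ENNReal.summable, mul_sum]
          simp only [ENNReal.tsum_mul_left]
      _ ≤ (G.degree u : ℝ≥0∞)⁻¹ * ∑ w : G.neighborSet u, 1 := by gcongr; exact ih _
      _ ≤ 1 := by
          rw [sum_const, card_univ, card_neighborSet_eq_degree, nsmul_eq_mul, mul_one]
          exact ENNReal.inv_mul_le_one _

theorem Connected.tsum_sphere_le_of_forall_isPath (hconn : G.Connected) (x : V) (N : ℕ)
    {f : V → ℝ} {B : ℝ}
    (h : ∀ y (p : G.Walk x y), p.IsPath → p.length = N →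
      f y * ∏ i ∈ range N, (G.degree (p.getVert i) : ℝ) ≤ B) :
    ∑' y : {y : V // G.dist x y = N}, ENNReal.ofReal (f y) ≤ ENNReal.ofReal B := by
  classical
  have hpt : ∀ y : {y // G.dist x y = N}, ENNReal.ofReal (f y) ≤
      ENNReal.ofReal B * ∑ p ∈ G.finsetWalkLength N x y, p.weight := by
    rintro ⟨y, hy⟩
    obtain ⟨p, hp, hlen⟩ := hconn.exists_path_of_dist x y
    rw [hy] at hlen
    calc ENNReal.ofReal (f y) ≤ ENNReal.ofReal B * p.weight :=
          p.ofReal_le_ofReal_mul_weight (by rw [hlen]; exact h y p hp hlen)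
      _ ≤ _ := by
          gcongr
          exact single_le_sum (fun _ _ => zero_le) (mem_finsetWalkLength_iff.2 hlen)
  calc ∑' y : {y // G.dist x y = N}, ENNReal.ofReal (f y)
      ≤ ∑' y : {y // G.dist x y = N},
          ENNReal.ofReal B * ∑ p ∈ G.finsetWalkLength N x y, p.weight :=
        ENNReal.tsum_le_tsum hpt
    _ ≤ ∑' y, ENNReal.ofReal B * ∑ p ∈ G.finsetWalkLength N x y, p.weight :=
        ENNReal.tsum_comp_le_tsum_of_injective Subtype.val_injective _
    _ = ENNReal.ofReal B * ∑' y, ∑ p ∈ G.finsetWalkLength N x y, p.weight :=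
        ENNReal.tsum_mul_left
    _ ≤ ENNReal.ofReal B :=
        mul_le_of_le_one_right' (tsum_sum_weight_finsetWalkLength_le_one N x)

end Walks

end SimpleGraph

namespace RepulsiveGraph

variable {V : Type} {G : SimpleGraph V} [G.LocallyFinite] {nstar : ℕ} {φ : ℝ → ℝ} {C : ℝ}

theorem log_degree_le_mul_dist
    (hrep : RepulsiveGraph G nstar φ) (hC : 0 ≤ C)
    (hφ : ∀ b : ℝ, (nstar : ℝ) + 1 ≤ b → log b ≤ C * φ b) {u v : V} (huv : u ≠ v)
    (hu : nstar < G.degree u) (hv : nstar < G.degree v) : log (G.degree u) ≤ C * G.dist u v := by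
  have hu' : (nstar : ℝ) + 1 ≤ G.degree u := by exact_mod_cast hu
  calc log (G.degree u) ≤ log (max (G.degree u : ℝ) (G.degree v)) :=
        log_le_log (by linarith [(nstar.cast_nonneg : (0 : ℝ) ≤ nstar)]) (le_max_left _ _)
    _ ≤ C * φ (max (G.degree u : ℝ) (G.degree v)) := hφ _ (hu'.trans (le_max_left _ _))
    _ ≤ C * G.dist u v := mul_le_mul_of_nonneg_left (hrep u v huv hu hv) hC

theorem exists_log_degree_le
    (hrep : RepulsiveGraph G nstar φ) (hC : 0 ≤ C)
    (hφ : ∀ b : ℝ, (nstar : ℝ) + 1 ≤ b → log b ≤ C * φ b) (hconn : G.Connected) (x : V) :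
    ∃ c, 0 ≤ c ∧ ∀ v, nstar < G.degree v → log (G.degree v) ≤ C * G.dist x v + c := by
  by_cases hbig : ∃ z, nstar < G.degree z
  · obtain ⟨z, hz⟩ := hbig
    refine ⟨C * G.dist x z + log (G.degree z), by positivity, fun v hv => ?_⟩
    have hxv : 0 ≤ C * G.dist x v := by positivity
    rcases eq_or_ne v z with rfl | hvz
    · linarith
    · have htri : (G.dist v z : ℝ) ≤ G.dist x v + G.dist x z := by
        rw [G.dist_comm (u := x)]
        exact_mod_cast hconn.dist_triangle
      have := hrep.log_degree_le_mul_dist hC hφ hvz hv hz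
      nlinarith [log_natCast_nonneg (G.degree z)]
  · exact ⟨0, le_rfl, fun v hv => (hbig ⟨v, hv⟩).elim⟩

theorem sum_log_degree_getVert_le
    (hrep : RepulsiveGraph G nstar φ) (hC : 0 ≤ C)
    (hφ : ∀ b : ℝ, (nstar : ℝ) + 1 ≤ b → log b ≤ C * φ b) {c : ℝ} (hc : 0 ≤ c) {x y : V}
    (hx : ∀ v, nstar < G.degree v → log (G.degree v) ≤ C * G.dist x v + c)
    {p : G.Walk x y} (hp : p.IsPath) :
    ∑ i ∈ range (p.length + 1), log (G.degree (p.getVert i)) ≤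
      (log nstar + 2 * C) * p.length + (log nstar + c) := by
  classical
  set I := (range (p.length + 1)).filter fun i => nstar < G.degree (p.getVert i)
  have hsplit : ∑ i ∈ range (p.length + 1), log (G.degree (p.getVert i)) ≤
      (p.length + 1) * log nstar + ∑ i ∈ I, log (G.degree (p.getVert i)) := calc
    _ ≤ ∑ i ∈ range (p.length + 1), (log nstar +
          if nstar < G.degree (p.getVert i) then log (G.degree (p.getVert i)) else 0) := by
      refine sum_le_sum fun i _ => ?_
      split_ifs with h
      · linarith [log_natCast_nonneg nstar]
      · rcases (G.degree (p.getVert i)).eq_zero_or_pos with h0 | hpos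
        · simp [h0, log_natCast_nonneg]
        · simpa using log_le_log (by exact_mod_cast hpos) (by exact_mod_cast not_lt.1 h)
    _ = _ := by
      rw [sum_add_distrib, sum_const, card_range, nsmul_eq_mul, sum_ite, sum_const_zero, add_zero]
      push_cast; ring
  have hbig : ∑ i ∈ I, log (G.degree (p.getVert i)) ≤ C * p.length + (C * p.length + c) := by
    refine sum_le_mul_add_of_forall_le_mul_sub hC (by positivity) ?_ ?_ ?_
    · intro i hi
      simp only [I, mem_filter, mem_range] at hi
      omega
    · intro i hi j hj hij
      simp only [I, mem_filter, mem_range] at hi hj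
      have hne : p.getVert i ≠ p.getVert j := fun h =>
        hij.ne (hp.getVert_injOn (Nat.lt_succ_iff.1 hi.1) (Nat.lt_succ_iff.1 hj.1) h)
      have hdist : (G.dist (p.getVert i) (p.getVert j) : ℝ) ≤ j - i := by
        rw [← Nat.cast_sub hij.le]
        exact_mod_cast p.dist_getVert_le hij.le
      calc log (G.degree (p.getVert i)) ≤ C * G.dist (p.getVert i) (p.getVert j) :=
            hrep.log_degree_le_mul_dist hC hφ hne hi.2 hj.2
        _ ≤ C * (j - i) := mul_le_mul_of_nonneg_left hdist hC
    · intro i hi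
      simp only [I, mem_filter, mem_range] at hi
      have hdist : (G.dist x (p.getVert i) : ℝ) ≤ p.length := by
        have := p.dist_getVert_le (Nat.zero_le i)
        rw [SimpleGraph.Walk.getVert_zero] at this
        exact_mod_cast this.trans (by omega)
      linarith [hx _ hi.2, mul_le_mul_of_nonneg_left hdist hC]
  linarith

end RepulsiveGraph

theorem exponential_sphere_sum_bound_general
    (nstar : ℕ) (hn : 2 < nstar) (υ ε : ℝ) (hυ : 0 < υ) (hε : 0 < ε)
    (θ : ℝ) (hθ : 0 < θ) :
    ∃ a : ℝ, 0 < a ∧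
      ∀ (V : Type) (_ : Countable V) (G : SimpleGraph V)
        (_ : ∀ v : V, Fintype (G.neighborSet v)),
        G.Connected → RepulsiveGraph G nstar (phiRep υ ε) →
        ∀ x : V, ∃ Nx : ℕ, ∀ N : ℕ, Nx ≤ N →
          (∑' y : {y : V // G.dist x y = N},
              ENNReal.ofReal ((G.degree (y : V) : ℝ) ^ (1 + θ))) ≤
            ENNReal.ofReal (Real.exp (a * N)) := by
  have he : exp 1 < (nstar : ℝ) + 1 := by
    have : (3 : ℝ) ≤ nstar := by exact_mod_cast hn
    linarith [exp_one_lt_d9]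
  obtain ⟨C, hC, hφ⟩ := exists_log_le_mul_phiRep hυ (by linarith : 0 ≤ 1 + ε) he
  have hlog := log_natCast_nonneg nstar
  refine ⟨(2 + θ) * (log nstar + 2 * C) + 1,
    add_pos_of_nonneg_of_pos (mul_nonneg (by linarith) (by linarith)) one_pos, ?_⟩
  intro V _ G _ hconn hrep x
  obtain ⟨c, hc, hx⟩ := hrep.exists_log_degree_le hC hφ hconn x
  refine ⟨⌈(2 + θ) * (log nstar + c)⌉₊, fun N hN =>
    hconn.tsum_sphere_le_of_forall_isPath (f := fun y => (G.degree y : ℝ) ^ (1 + θ)) x N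
      fun y p hp hlen => ?_⟩
  have hNx : (2 + θ) * (log nstar + c) ≤ N := Nat.ceil_le.1 hN
  have hsum := hrep.sum_log_degree_getVert_le hC hφ hc hx hp
  have hy : G.degree y = G.degree (p.getVert N) := by rw [← hlen, p.getVert_length]
  rw [hlen] at hsum
  rw [hy]
  calc _ ≤ exp ((2 + θ) * ∑ i ∈ range (N + 1), log (G.degree (p.getVert i))) :=
        rpow_mul_prod_le_exp_mul_sum_log (by linarith) (fun i => G.degree (p.getVert i)) N
    _ ≤ exp (((2 + θ) * (log nstar + 2 * C) + 1) * N) := exp_le_exp.2 <| by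
        nlinarith [mul_le_mul_of_nonneg_left hsum (by linarith : (0 : ℝ) ≤ 2 + θ)]

/-- **Lemma 4 (exponential sphere-sum bound).** Let `n_* > 2`, `υ, ε > 0` and
`φ(b) = υ log b (log log b)^{1+ε}` with `φ(n_*+1) > 1`. Then for every `θ > 0` there is
`a > 0`, depending only on `θ, n_*, υ, ε`, such that for every `G ∈ 𝔾(n_*,φ)` and every
vertex `x` there is `N_x ∈ ℕ` with `Σ_{y : ρ(x,y)=N} n(y)^{1+θ} ≤ exp(aN)` for `N ≥ N_x`. -/
theorem exponential_sphere_sum_bound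
    (nstar : ℕ) (hn : 2 < nstar) (υ ε : ℝ) (hυ : 0 < υ) (hε : 0 < ε)
    (hφ1 : 1 < phiRep υ ε ((nstar : ℝ) + 1)) (θ : ℝ) (hθ : 0 < θ) :
    ∃ a : ℝ, 0 < a ∧
      ∀ (V : Type) (_ : Countable V) (G : SimpleGraph V)
        (_ : ∀ v : V, Fintype (G.neighborSet v)),
        G.Connected → RepulsiveGraph G nstar (phiRep υ ε) →
        ∀ x : V, ∃ Nx : ℕ, ∀ N : ℕ, Nx ≤ N →
          (∑' y : {y : V // G.dist x y = N},
              ENNReal.ofReal ((G.degree (y : V) : ℝ) ^ (1 + θ))) ≤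
            ENNReal.ofReal (Real.exp (a * N)) :=
  exponential_sphere_sum_bound_general nstar hn υ ε hυ hε θ hθ
end
end
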